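/- Let n ∈ ℕ, let β and β̃ be class-𝒦𝓛 functions, let Δ₂ > 0, let t₀ ∈ ℝ, and let x, ξ : ℝ → ℝⁿ be functions such that for all t ≥ t₀ one has ‖ξ(t)‖ ≤ max{β(‖ξ(t₀)‖, t − t₀), Δ₂} and ‖x(t) − ξ(t)‖ ≤ β̃(‖x(t₀) − ξ(t₀)‖, t − t₀). Define β̄(r, s) := max{2·β(r, s) + β̃(r, s), 2·β̃(r, s)} and ρ(t) := ‖x(t)‖ + ‖ξ(t)‖. Then β̄ is a class-𝒦𝓛 function and for all t ≥ t₀, ρ(t) ≤ max{β̄(ρ(t₀), t − t₀), 4Δ₂}; in particular ‖x(t)‖ ≤ max{β̄(ρ(t₀), t − t₀), 4Δ₂} for all t ≥ t₀. -/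

import Mathlib

/-!
Since `x = (x - ξ) + ξ`, we get `‖x‖ + ‖ξ‖ ≤ 2‖ξ‖ + ‖x - ξ‖ ≤ 2 max{β, Δ₂} + β̃`, where both
𝒦𝓛 bounds are evaluated at `ρ(t₀)` using `‖ξ(t₀)‖, ‖x(t₀) - ξ(t₀)‖ ≤ ρ(t₀)` and monotonicity
in the first argument. If `β ≥ Δ₂` this is `2β + β̃`; otherwise it is at most
`2Δ₂ + β̃ ≤ 2 max{2Δ₂, β̃} = max{4Δ₂, 2β̃}`. The class 𝒦𝓛 is closed under sums, positive
multiples and pointwise maxima, so `β̄` is of class 𝒦𝓛.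
-/

open Filter Topology

/-- A function `β : ℝ≥0 × ℝ≥0 → ℝ≥0` (modeled on `ℝ → ℝ → ℝ` with the relevant
properties required on the nonnegative reals) is of class 𝒦𝓛 if for each fixed
`t ≥ 0` the map `s ↦ β s t` is continuous, strictly increasing and zero at zero,
and for each fixed `s > 0` the map `t ↦ β s t` is strictly positive, decreasing,
and tends to `0` as `t → ∞`. -/
structure IsKL (β : ℝ → ℝ → ℝ) : Prop where
  continuousOn : ∀ t ≥ (0 : ℝ), ContinuousOn (fun s => β s t) (Set.Ici 0)
  strictMonoOn : ∀ t ≥ (0 : ℝ), StrictMonoOn (fun s => β s t) (Set.Ici 0)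
  zero : ∀ t ≥ (0 : ℝ), β 0 t = 0
  pos : ∀ s > (0 : ℝ), ∀ t ≥ (0 : ℝ), 0 < β s t
  antitoneOn : ∀ s > (0 : ℝ), AntitoneOn (fun t => β s t) (Set.Ici 0)
  tendsto_zero : ∀ s > (0 : ℝ), Tendsto (fun t => β s t) atTop (𝓝 0)

open Set

namespace IsKL

variable {β γ : ℝ → ℝ → ℝ}

theorem monotoneOn (hβ : IsKL β) {t : ℝ} (ht : 0 ≤ t) : MonotoneOn (fun s => β s t) (Ici 0) :=
  (hβ.strictMonoOn t ht).monotoneOn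

theorem add (hβ : IsKL β) (hγ : IsKL γ) : IsKL (fun r s => β r s + γ r s) where
  continuousOn t ht := (hβ.continuousOn t ht).add (hγ.continuousOn t ht)
  strictMonoOn t ht := (hβ.strictMonoOn t ht).add (hγ.strictMonoOn t ht)
  zero t ht := by simp only [hβ.zero t ht, hγ.zero t ht, add_zero]
  pos s hs t ht := add_pos (hβ.pos s hs t ht) (hγ.pos s hs t ht)
  antitoneOn s hs := (hβ.antitoneOn s hs).add (hγ.antitoneOn s hs)
  tendsto_zero s hs := by simpa using (hβ.tendsto_zero s hs).add (hγ.tendsto_zero s hs)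

theorem const_mul (hβ : IsKL β) {c : ℝ} (hc : 0 < c) : IsKL (fun r s => c * β r s) where
  continuousOn t ht := continuousOn_const.mul (hβ.continuousOn t ht)
  strictMonoOn t ht _ ha _ hb hab := mul_lt_mul_of_pos_left (hβ.strictMonoOn t ht ha hb hab) hc
  zero t ht := by simp only [hβ.zero t ht, mul_zero]
  pos s hs t ht := mul_pos hc (hβ.pos s hs t ht)
  antitoneOn s hs _ ha _ hb hab := mul_le_mul_of_nonneg_left (hβ.antitoneOn s hs ha hb hab) hc.le
  tendsto_zero s hs := by simpa using (hβ.tendsto_zero s hs).const_mul c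

theorem max (hβ : IsKL β) (hγ : IsKL γ) : IsKL (fun r s => max (β r s) (γ r s)) where
  continuousOn t ht := (hβ.continuousOn t ht).sup (hγ.continuousOn t ht)
  strictMonoOn t ht _ ha _ hb hab := max_lt_max (hβ.strictMonoOn t ht ha hb hab)
    (hγ.strictMonoOn t ht ha hb hab)
  zero t ht := by simp only [hβ.zero t ht, hγ.zero t ht, max_self]
  pos s hs t ht := lt_max_of_lt_left (hβ.pos s hs t ht)
  antitoneOn s hs _ ha _ hb hab := max_le_max (hβ.antitoneOn s hs ha hb hab)
    (hγ.antitoneOn s hs ha hb hab)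
  tendsto_zero s hs := by simpa using (hβ.tendsto_zero s hs).max (hγ.tendsto_zero s hs)

end IsKL

theorem two_mul_max_add_le (b c Δ : ℝ) :
    2 * max b Δ + c ≤ max (max (2 * b + c) (2 * c)) (4 * Δ) := by
  rcases le_total Δ b with h | h
  · rw [max_eq_left h]
    exact le_max_of_le_left (le_max_left _ _)
  · rw [max_eq_right h]
    rcases le_total c (2 * Δ) with h' | h'
    · exact le_max_of_le_right (by linarith)
    · exact le_max_of_le_left (le_max_of_le_right (by linarith))

theorem norm_add_norm_le_of_norm_le_max {E : Type*} [SeminormedAddGroup E] {x ξ : E}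
    {b c Δ : ℝ} (hξ : ‖ξ‖ ≤ max b Δ) (herr : ‖x - ξ‖ ≤ c) :
    ‖x‖ + ‖ξ‖ ≤ max (max (2 * b + c) (2 * c)) (4 * Δ) :=
  calc ‖x‖ + ‖ξ‖ ≤ 2 * ‖ξ‖ + ‖x - ξ‖ := by linarith [norm_le_norm_sub_add x ξ]
    _ ≤ 2 * max b Δ + c := by linarith
    _ ≤ _ := two_mul_max_add_le b c Δ

theorem norm_add_norm_le_of_KL_bounds {E : Type*} [SeminormedAddGroup E]
    {β βt : ℝ → ℝ → ℝ} (hβ : IsKL β) (hβt : IsKL βt) {Δ t₀ t : ℝ} (ht : t₀ ≤ t) {x ξ : ℝ → E}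
    (hξ : ‖ξ t‖ ≤ max (β ‖ξ t₀‖ (t - t₀)) Δ)
    (herr : ‖x t - ξ t‖ ≤ βt ‖x t₀ - ξ t₀‖ (t - t₀)) :
    ‖x t‖ + ‖ξ t‖ ≤
      max (max (2 * β (‖x t₀‖ + ‖ξ t₀‖) (t - t₀) + βt (‖x t₀‖ + ‖ξ t₀‖) (t - t₀))
            (2 * βt (‖x t₀‖ + ‖ξ t₀‖) (t - t₀)))
        (4 * Δ) := by
  have hs : 0 ≤ t - t₀ := sub_nonneg.2 ht
  have hρ₀ : 0 ≤ ‖x t₀‖ + ‖ξ t₀‖ := by positivity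
  have hβ_le : β ‖ξ t₀‖ (t - t₀) ≤ β (‖x t₀‖ + ‖ξ t₀‖) (t - t₀) :=
    hβ.monotoneOn hs (norm_nonneg _) hρ₀ (le_add_of_nonneg_left (norm_nonneg _))
  have hβt_le : βt ‖x t₀ - ξ t₀‖ (t - t₀) ≤ βt (‖x t₀‖ + ‖ξ t₀‖) (t - t₀) :=
    hβt.monotoneOn hs (norm_nonneg _) hρ₀ (norm_sub_le _ _)
  exact norm_add_norm_le_of_norm_le_max (hξ.trans (max_le_max_right Δ hβ_le))
    (herr.trans hβt_le)

theorem observer_based_feedback_combined_bound_general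
    (n : ℕ) (β βt : ℝ → ℝ → ℝ) (hβ : IsKL β) (hβt : IsKL βt)
    (Δ₂ : ℝ) (t₀ : ℝ)
    (x ξ : ℝ → EuclideanSpace ℝ (Fin n))
    (hξ : ∀ t ≥ t₀, ‖ξ t‖ ≤ max (β ‖ξ t₀‖ (t - t₀)) Δ₂)
    (herr : ∀ t ≥ t₀, ‖x t - ξ t‖ ≤ βt ‖x t₀ - ξ t₀‖ (t - t₀)) :
    IsKL (fun r s => max (2 * β r s + βt r s) (2 * βt r s)) ∧
    (∀ t ≥ t₀, ‖x t‖ + ‖ξ t‖ ≤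
      max (max (2 * β (‖x t₀‖ + ‖ξ t₀‖) (t - t₀) + βt (‖x t₀‖ + ‖ξ t₀‖) (t - t₀))
            (2 * βt (‖x t₀‖ + ‖ξ t₀‖) (t - t₀)))
        (4 * Δ₂)) ∧
    (∀ t ≥ t₀, ‖x t‖ ≤
      max (max (2 * β (‖x t₀‖ + ‖ξ t₀‖) (t - t₀) + βt (‖x t₀‖ + ‖ξ t₀‖) (t - t₀))
            (2 * βt (‖x t₀‖ + ‖ξ t₀‖) (t - t₀)))
        (4 * Δ₂)) := by
  have hρ t (ht : t ≥ t₀) :=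
    norm_add_norm_le_of_KL_bounds hβ hβt ht (hξ t ht) (herr t ht)
  exact ⟨((hβ.const_mul two_pos).add hβt).max (hβt.const_mul two_pos), hρ,
    fun t ht => (le_add_of_nonneg_right (norm_nonneg _)).trans (hρ t ht)⟩

/-- trajectory-level content of the main theorem on observer-based
feedback. -/
theorem observer_based_feedback_combined_bound
    (n : ℕ) (β βt : ℝ → ℝ → ℝ) (hβ : IsKL β) (hβt : IsKL βt)
    (Δ₂ : ℝ) (hΔ₂ : 0 < Δ₂) (t₀ : ℝ)
    (x ξ : ℝ → EuclideanSpace ℝ (Fin n))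
    (hξ : ∀ t ≥ t₀, ‖ξ t‖ ≤ max (β ‖ξ t₀‖ (t - t₀)) Δ₂)
    (herr : ∀ t ≥ t₀, ‖x t - ξ t‖ ≤ βt ‖x t₀ - ξ t₀‖ (t - t₀)) :
    IsKL (fun r s => max (2 * β r s + βt r s) (2 * βt r s)) ∧
    (∀ t ≥ t₀, ‖x t‖ + ‖ξ t‖ ≤
      max (max (2 * β (‖x t₀‖ + ‖ξ t₀‖) (t - t₀) + βt (‖x t₀‖ + ‖ξ t₀‖) (t - t₀))
            (2 * βt (‖x t₀‖ + ‖ξ t₀‖) (t - t₀)))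
        (4 * Δ₂)) ∧
    (∀ t ≥ t₀, ‖x t‖ ≤
      max (max (2 * β (‖x t₀‖ + ‖ξ t₀‖) (t - t₀) + βt (‖x t₀‖ + ‖ξ t₀‖) (t - t₀))
            (2 * βt (‖x t₀‖ + ‖ξ t₀‖) (t - t₀)))
        (4 * Δ₂)) :=
  observer_based_feedback_combined_bound_general n β βt hβ hβt Δ₂ t₀ x ξ hξ herr
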